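/- (The Roller-Coaster Choice-Deferral Effect) If ρ is a decision-conflict logit with representation (u,D), then for all menus A, B with A ⊋ B and |B| ≥ 2, writing u(S) := ∑_{s∈S} u(s): ρ(o,A) ≤ ρ(o,B) if and only if (D(A) − D(B))/D(B) ≤ (u(A) − u(B))/u(B). -/

import Mathlib

open Finset

variable {X : Type*} [Fintype X] [DecidableEq X]

/-- The probability of choosing the outside option (deferring) at menu `A`. -/
noncomputable def defer (ρ : Finset X → X → ℝ) (A : Finset X) : ℝ :=
  1 - ∑ a ∈ A, ρ A a

/-- `ρ` is a random non-forced choice model on `X`. -/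
def IsRNFC (ρ : Finset X → X → ℝ) : Prop :=
  ∀ A : Finset X, A.Nonempty →
    (∀ a ∈ A, 0 ≤ ρ A a ∧ ρ A a ≤ 1) ∧
    (∀ a, a ∉ A → ρ A a = 0) ∧
    (∑ a ∈ A, ρ A a) ≤ 1

/-- `ρ` is a decision-conflict logit with representation `(u, D)`. -/
def IsDCL (ρ : Finset X → X → ℝ) (u : X → ℝ) (D : Finset X → ℝ) : Prop :=
  (∀ a, 0 < u a) ∧
  (∀ A : Finset X, A.Nonempty → 0 ≤ D A ∧ (D A = 0 ↔ A.card = 1)) ∧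
  (∀ A : Finset X, A.Nonempty → ∀ a ∈ A, ρ A a = u a / ((∑ b ∈ A, u b) + D A))

/-- `d / (x + d)` is a monotone function of the ratio `d / x`. -/
lemma div_add_le_div_add_iff_sub_div_le_sub_div {x y d e : ℝ} (hx : 0 < x) (hy : 0 < y)
    (hd : 0 ≤ d) (he : 0 < e) :
    d / (x + d) ≤ e / (y + e) ↔ (d - e) / e ≤ (x - y) / y := by
  rw [div_le_div_iff₀ (by positivity) (by positivity), sub_div, sub_div, div_self he.ne',
    div_self hy.ne', sub_le_sub_iff_right, div_le_div_iff₀ he hy]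
  constructor <;> intro h <;> linarith

namespace IsDCL

variable {α : Type*} {ρ : Finset α → α → ℝ} {u : α → ℝ} {D : Finset α → ℝ}

lemma sum_pos (h : IsDCL ρ u D) {S : Finset α} (hS : S.Nonempty) : 0 < ∑ a ∈ S, u a :=
  Finset.sum_pos (fun a _ => h.1 a) hS

lemma complexity_nonneg (h : IsDCL ρ u D) {S : Finset α} (hS : S.Nonempty) : 0 ≤ D S :=
  (h.2.1 S hS).1

lemma complexity_pos (h : IsDCL ρ u D) {S : Finset α} (hS : 2 ≤ S.card) : 0 < D S := by
  have hne : S.Nonempty := Finset.card_pos.mp (by omega)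
  refine (h.complexity_nonneg hne).lt_of_ne fun h0 => ?_
  have := (h.2.1 S hne).2.mp h0.symm
  omega

lemma defer_eq (h : IsDCL ρ u D) {S : Finset α} (hS : S.Nonempty) :
    defer ρ S = D S / ((∑ a ∈ S, u a) + D S) := by
  have hden : (∑ a ∈ S, u a) + D S ≠ 0 :=
    (add_pos_of_pos_of_nonneg (h.sum_pos hS) (h.complexity_nonneg hS)).ne'
  rw [defer, Finset.sum_congr rfl (h.2.2 S hS), ← Finset.sum_div, eq_div_iff hden]
  field_simp
  ring

end IsDCL

theorem stmt5_general (ρ : Finset X → X → ℝ)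
    (u : X → ℝ) (D : Finset X → ℝ) (h : IsDCL ρ u D) :
    ∀ A B : Finset X, 2 ≤ B.card → B ⊂ A →
      (defer ρ A ≤ defer ρ B ↔
        (D A - D B) / D B ≤ ((∑ a ∈ A, u a) - ∑ b ∈ B, u b) / ∑ b ∈ B, u b) := by
  intro A B hB hBA
  have hBne : B.Nonempty := Finset.card_pos.mp (by omega)
  have hAne : A.Nonempty := hBne.mono hBA.subset
  rw [h.defer_eq hAne, h.defer_eq hBne]
  exact div_add_le_div_add_iff_sub_div_le_sub_div (h.sum_pos hAne) (h.sum_pos hBne)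
    (h.complexity_nonneg hAne) (h.complexity_pos hB)

/-- The "roller-coaster" choice-deferral effect: upon menu expansion, deferral becomes
(weakly) less likely iff the percentage increase in total utility weakly exceeds the
percentage increase in decision complexity. -/
theorem stmt5 (ρ : Finset X → X → ℝ) (hρ : IsRNFC ρ)
    (u : X → ℝ) (D : Finset X → ℝ) (h : IsDCL ρ u D) :
    ∀ A B : Finset X, 2 ≤ B.card → B ⊂ A →
      (defer ρ A ≤ defer ρ B ↔
        (D A - D B) / D B ≤ ((∑ a ∈ A, u a) - ∑ b ∈ B, u b) / ∑ b ∈ B, u b) :=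
  stmt5_general ρ u D h
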